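/- arXiv:2501.09852 — 2 statements merged into one kernel-verified Lean document; each statement's English description precedes it below -/
import Mathlib

section
/- Assume n is odd, n ≥ 3, and a ≠ c. Let X ∈ F_{q^2}, X ≠ 0, be a periodic point of f. Then τ0 divides the minimal period of X under f; and if moreover a + c ≠ 0 and X^q ≠ −X, then τ := lcm(ord((a+c)/(a−c)), τ0) divides the minimal period of X under f, where ord denotes multiplicative order in F_q^*. -/
/-!
Let σ be the Frobenius `x ↦ x ^ q` of `F_{q²}` and put `D Y = Y - σ Y`, `T Y = Y + σ Y`.
Since `n - 1` is even, `D (f Y) = (a - c) D(Y) ^ n` and `T (f Y) = (a + c) T(Y) D(Y) ^ (n - 1)`.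
Hence `v = D / (2β)`, which takes values in `F_q`, satisfies `v (f Y) = α ^ l0 · v(Y) ^ n`, and
`T / D` is multiplied by `ρ = (a + c) / (a - c)` at each step. If `X` has period `m`, put
`S = 1 + n + ⋯ + n ^ (m - 1)`; then `ρ ^ m = 1` and `α ^ (l0 S) v(X) ^ ((n - 1) S) = 1`. As `α` has
order `q - 1` and `v(X) ^ (q - 1) = 1`, this gives `gcd(q - 1, (n - 1) S) ∣ l0 S`. Comparing
`ℓ`-adic valuations, and computing `ν_ℓ S` by lifting the exponent, yields `τ0 ∣ m`.
-/

open Finset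

theorem gcd_dvd_of_pow_mul_pow_eq_one {G : Type*} [CommMonoid G] {x y : G} {d M N : ℕ}
    (hd : d ≠ 0) (hx : orderOf x = d) (hy : y ^ d = 1) (h : x ^ N * y ^ M = 1) :
    Nat.gcd d M ∣ N := by
  set g := Nat.gcd d M
  have hgd : g ∣ d := Nat.gcd_dvd_left d M
  have hdg : 0 < d / g := Nat.div_pos (Nat.gcd_le_left M (Nat.pos_of_ne_zero hd))
    (Nat.gcd_pos_of_pos_left M (Nat.pos_of_ne_zero hd))
  have hyM : y ^ (M * (d / g)) = 1 := by
    rw [← Nat.mul_div_assoc M hgd, mul_comm, Nat.mul_div_assoc d (Nat.gcd_dvd_right d M),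
      pow_mul, hy, one_pow]
  have hxN : x ^ (N * (d / g)) = 1 := by
    calc x ^ (N * (d / g)) = (x ^ N * y ^ M) ^ (d / g) := by
          rw [mul_pow, ← pow_mul, ← pow_mul, hyM, mul_one]
      _ = 1 := by rw [h, one_pow]
  have : g * (d / g) ∣ N * (d / g) := by
    rw [Nat.mul_div_cancel' hgd]
    simpa only [hx] using orderOf_dvd_of_pow_eq_one hxN
  exact Nat.dvd_of_mul_dvd_mul_right hdg this

theorem padicValNat_le_of_gcd_dvd {ℓ d M N : ℕ} [Fact ℓ.Prime] (hd : d ≠ 0) (hM : M ≠ 0)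
    (hN : N ≠ 0) (h : Nat.gcd d M ∣ N) (hNM : padicValNat ℓ N < padicValNat ℓ M) :
    padicValNat ℓ d ≤ padicValNat ℓ N := by
  by_contra! hlt
  have hdvd_d : ℓ ^ (padicValNat ℓ N + 1) ∣ d := (padicValNat_dvd_iff_le hd).2 hlt
  have hdvd_M : ℓ ^ (padicValNat ℓ N + 1) ∣ M := (padicValNat_dvd_iff_le hM).2 hNM
  exact pow_succ_padicValNat_not_dvd hN ((Nat.dvd_gcd hdvd_d hdvd_M).trans h)

theorem padicValNat_lt_of_dvd_div_gcd {ℓ a b : ℕ} [Fact ℓ.Prime] (ha : a ≠ 0)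
    (h : ℓ ∣ a / Nat.gcd a b) : padicValNat ℓ b < padicValNat ℓ a := by
  by_contra! hle
  have hdvd_gcd : ℓ ^ padicValNat ℓ a ∣ Nat.gcd a b :=
    Nat.dvd_gcd pow_padicValNat_dvd (pow_dvd_pow ℓ hle |>.trans pow_padicValNat_dvd)
  have hmul : Nat.gcd a b * ℓ ∣ a := (Nat.dvd_div_iff_mul_dvd (Nat.gcd_dvd_left a b)).1 h
  exact pow_succ_padicValNat_not_dvd ha ((pow_succ ℓ _ ▸ mul_dvd_mul_right hdvd_gcd ℓ).trans hmul)

theorem Nat.sub_one_mul_geom_sum {n : ℕ} (hn : 1 ≤ n) (k : ℕ) :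
    (n - 1) * ∑ i ∈ range k, n ^ i = n ^ k - 1 := by
  have h := geom_sum_mul_add (n - 1) k
  rw [Nat.sub_add_cancel hn] at h
  rw [← h, mul_comm, Nat.add_sub_cancel]

theorem Nat.odd_geom_sum_iff {n : ℕ} (hn : Odd n) (k : ℕ) :
    Odd (∑ i ∈ range k, n ^ i) ↔ Odd k := by
  rw [Finset.odd_sum_iff_odd_card_odd, Finset.filter_true_of_mem (fun i _ => hn.pow), card_range]

theorem padicValNat_geom_sum_of_dvd_sub_one {ℓ n k : ℕ} [Fact ℓ.Prime] (hℓ : Odd ℓ) (hn : 1 < n)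
    (hℓn : ℓ ∣ n - 1) (hk : k ≠ 0) :
    padicValNat ℓ (∑ i ∈ range k, n ^ i) = padicValNat ℓ k := by
  have hℓn' : ¬ ℓ ∣ n := fun h => Nat.Prime.one_lt Fact.out |>.ne' <|
    Nat.dvd_one.1 (by simpa [Nat.sub_sub_self hn.le] using Nat.dvd_sub h hℓn)
  have hlte := padicValNat.pow_sub_pow hℓ (y := 1) hn (by simpa using hℓn) hℓn' hk
  rw [one_pow, ← Nat.sub_one_mul_geom_sum hn.le, padicValNat.mul (by omega)
    (geom_sum_pos (Nat.zero_le n) hk).ne'] at hlte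
  omega

theorem padicValNat_two_geom_sum {n k : ℕ} (hn : Odd n) (hn1 : 1 < n) (hk : k ≠ 0)
    (hke : Even k) :
    padicValNat 2 (∑ i ∈ range k, n ^ i) = padicValNat 2 ((n + 1) / 2) + padicValNat 2 k := by
  have hlte := padicValNat.pow_two_sub_one hn1 hn.not_two_dvd_nat hk hke
  have h2 : padicValNat 2 (n + 1) = 1 + padicValNat 2 ((n + 1) / 2) := by
    conv_lhs => rw [← Nat.two_mul_div_two_of_even (hn.add_odd odd_one)]
    rw [padicValNat.mul two_ne_zero (by omega), padicValNat.self one_lt_two]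
  rw [← Nat.sub_one_mul_geom_sum hn1.le,
    padicValNat.mul (by omega) (geom_sum_pos (Nat.zero_le n) hk).ne', h2] at hlte
  omega

theorem Nat.prod_prime_pow_dvd {s : Finset ℕ} (hs : ∀ ℓ ∈ s, ℓ.Prime) {e : ℕ → ℕ} {k : ℕ}
    (h : ∀ ℓ ∈ s, ℓ ^ e ℓ ∣ k) : ∏ ℓ ∈ s, ℓ ^ e ℓ ∣ k := by
  induction s using Finset.induction_on with
  | empty => simp
  | insert ℓ s hℓs ih =>
    rw [Finset.prod_insert hℓs]
    refine Nat.Coprime.mul_dvd_of_dvd_of_dvd ?_ (h ℓ (mem_insert_self ℓ s))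
      (ih (fun r hr => hs r (mem_insert_of_mem hr)) (fun r hr => h r (mem_insert_of_mem hr)))
    refine Nat.Coprime.pow_left _ (Nat.Coprime.prod_right fun r hr => Nat.Coprime.pow_right _ ?_)
    exact (Nat.coprime_primes (hs ℓ (mem_insert_self ℓ s)) (hs r (mem_insert_of_mem hr))).2
      (ne_of_mem_of_not_mem hr hℓs).symm

/-- With `d = q - 1`, `eps0 d n l0` and `tau0 d n l0` are the paper's `ε0` and `τ0`. -/
def eps0 (d n l0 : ℕ) : ℕ :=
  if Even l0 then 0 else padicValNat 2 d - padicValNat 2 ((n + 1) / 2)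

def tau0 (d n l0 : ℕ) : ℕ :=
  if Nat.gcd (n - 1) l0 = n - 1 then 1 else
    2 ^ eps0 d n l0 * ∏ ℓ ∈ ((n - 1) / Nat.gcd (n - 1) l0).primeFactors.erase 2,
      ℓ ^ (padicValNat ℓ d - padicValNat ℓ l0)

section tau0

variable {d n l0 k : ℕ}

theorem two_pow_eps0_dvd (hd : d ≠ 0) (hn : Odd n) (hn1 : 1 < n) (hk : k ≠ 0)
    (h : Nat.gcd d ((n - 1) * ∑ i ∈ range k, n ^ i) ∣ l0 * ∑ i ∈ range k, n ^ i) :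
    2 ^ eps0 d n l0 ∣ k := by
  unfold eps0
  split_ifs with hl0
  · simp
  set S := ∑ i ∈ range k, n ^ i
  have hS : S ≠ 0 := (geom_sum_pos (Nat.zero_le n) hk).ne'
  have hl0' : padicValNat 2 l0 = 0 :=
    padicValNat.eq_zero_of_not_dvd (Nat.not_even_iff_odd.1 hl0 |>.not_two_dvd_nat)
  have hn1' : 1 ≤ padicValNat 2 (n - 1) :=
    one_le_padicValNat_of_dvd (by omega) (Nat.Odd.sub_odd hn odd_one).two_dvd
  have hl0ne : l0 ≠ 0 := by rintro rfl; exact hl0 (by decide)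
  have hn1ne : n - 1 ≠ 0 := by omega
  have hdS : padicValNat 2 d ≤ padicValNat 2 S := by
    have := padicValNat_le_of_gcd_dvd (ℓ := 2) hd (mul_ne_zero hn1ne hS) (mul_ne_zero hl0ne hS) h
    rw [padicValNat.mul hn1ne hS, padicValNat.mul hl0ne hS, hl0', zero_add] at this
    exact this (by omega)
  refine (pow_dvd_pow 2 ?_).trans (pow_padicValNat_dvd (n := k))
  rcases Nat.even_or_odd k with hke | hko
  · rw [padicValNat_two_geom_sum hn hn1 hk hke] at hdS
    omega
  · rw [padicValNat.eq_zero_of_not_dvd ((Nat.odd_geom_sum_iff hn k).2 hko).not_two_dvd_nat] at hdS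
    omega

theorem pow_padicValNat_sub_dvd {ℓ : ℕ} [Fact ℓ.Prime] (hℓ : Odd ℓ)
    (hℓn : ℓ ∣ (n - 1) / Nat.gcd (n - 1) l0) (hd : d ≠ 0) (hn1 : 1 < n) (hl0 : l0 ≠ 0)
    (hk : k ≠ 0)
    (h : Nat.gcd d ((n - 1) * ∑ i ∈ range k, n ^ i) ∣ l0 * ∑ i ∈ range k, n ^ i) :
    ℓ ^ (padicValNat ℓ d - padicValNat ℓ l0) ∣ k := by
  set S := ∑ i ∈ range k, n ^ i
  have hS : S ≠ 0 := (geom_sum_pos (Nat.zero_le n) hk).ne'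
  have hn1ne : n - 1 ≠ 0 := by omega
  have hlt : padicValNat ℓ l0 < padicValNat ℓ (n - 1) := padicValNat_lt_of_dvd_div_gcd hn1ne hℓn
  have hS_val : padicValNat ℓ S = padicValNat ℓ k :=
    padicValNat_geom_sum_of_dvd_sub_one hℓ hn1
      (hℓn.trans (Nat.div_dvd_of_dvd (Nat.gcd_dvd_left _ _))) hk
  have hdS := padicValNat_le_of_gcd_dvd (ℓ := ℓ) hd (mul_ne_zero hn1ne hS) (mul_ne_zero hl0 hS) h
  rw [padicValNat.mul hn1ne hS, padicValNat.mul hl0 hS, hS_val] at hdS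
  exact (pow_dvd_pow ℓ (by omega)).trans pow_padicValNat_dvd

theorem tau0_dvd (hd : d ≠ 0) (hn : Odd n) (hn1 : 1 < n) (hk : k ≠ 0)
    (h : Nat.gcd d ((n - 1) * ∑ i ∈ range k, n ^ i) ∣ l0 * ∑ i ∈ range k, n ^ i) :
    tau0 d n l0 ∣ k := by
  unfold tau0
  split_ifs with hg
  · exact one_dvd k
  have hl0 : l0 ≠ 0 := by rintro rfl; exact hg (Nat.gcd_zero_right _)
  have hodd : ∀ ℓ ∈ ((n - 1) / Nat.gcd (n - 1) l0).primeFactors.erase 2, ℓ.Prime ∧ ℓ ≠ 2 :=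
    fun ℓ hℓ => ⟨Nat.prime_of_mem_primeFactors (mem_of_mem_erase hℓ), ne_of_mem_erase hℓ⟩
  refine Nat.Coprime.mul_dvd_of_dvd_of_dvd ?_ (two_pow_eps0_dvd hd hn hn1 hk h)
    (Nat.prod_prime_pow_dvd (fun ℓ hℓ => (hodd ℓ hℓ).1) fun ℓ hℓ => ?_)
  · exact Nat.Coprime.pow_left _ <| Nat.Coprime.prod_right fun ℓ hℓ => Nat.Coprime.pow_right _ <|
      (Nat.coprime_primes Nat.prime_two (hodd ℓ hℓ).1).2 (hodd ℓ hℓ).2.symm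
  · have := Fact.mk (hodd ℓ hℓ).1
    exact pow_padicValNat_sub_dvd ((hodd ℓ hℓ).1.odd_of_ne_two (hodd ℓ hℓ).2)
      (Nat.dvd_of_mem_primeFactors (mem_of_mem_erase hℓ)) hd hn1 hl0 hk h

end tau0

theorem map_iterate_eq_pow_geom_sum_mul_pow {α M : Type*} [CommMonoid M] {f : α → α}
    {φ : α → M} {A : M} {n : ℕ} (hφ : ∀ x, φ (f x) = A * φ x ^ n) (k : ℕ) (x : α) :
    φ (f^[k] x) = A ^ (∑ i ∈ range k, n ^ i) * φ x ^ n ^ k := by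
  induction k with
  | zero => simp
  | succ k ih =>
    have hS : ∑ i ∈ range (k + 1), n ^ i = (∑ i ∈ range k, n ^ i) * n + 1 := by
      rw [sum_range_succ', sum_mul]
      simp [pow_succ]
    rw [Function.iterate_succ_apply', hφ, ih, hS, pow_add, pow_mul, pow_succ n k, pow_mul,
      mul_pow, pow_one]
    ac_rfl

theorem pow_geom_sum_mul_pow_eq_one_of_iterate_eq {α G : Type*} [CommGroupWithZero G]
    {f : α → α} {φ : α → G} {A : G} {n m : ℕ} (hn : 1 ≤ n) (hφ : ∀ x, φ (f x) = A * φ x ^ n)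
    {x : α} (hx : f^[m] x = x) (hφx : φ x ≠ 0) :
    A ^ (∑ i ∈ range m, n ^ i) * φ x ^ ((n - 1) * ∑ i ∈ range m, n ^ i) = 1 := by
  have h := map_iterate_eq_pow_geom_sum_mul_pow hφ m x
  rw [hx, ← Nat.sub_add_cancel (Nat.one_le_pow m n hn), ← Nat.sub_one_mul_geom_sum hn, pow_succ,
    ← mul_assoc] at h
  exact (mul_eq_right₀ hφx).1 h.symm

section twistedMap

variable {F : Type*} [Field F] (σ : F →+* F) (a c : F) (n : ℕ)

/-- For the Frobenius `σ x = x ^ q` of `F_{q²}` this is the map `f`. -/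
def twistedMap (Y : F) : F := (c * σ Y + a * Y) * (σ Y - Y) ^ (n - 1)

variable {σ a c n}

theorem twistedMap_zero : twistedMap σ a c n 0 = 0 := by simp [twistedMap]

theorem map_twistedMap (hσ : ∀ x, σ (σ x) = x) (ha : σ a = a) (hc : σ c = c) (Y : F) :
    σ (twistedMap σ a c n Y) = (c * Y + a * σ Y) * (Y - σ Y) ^ (n - 1) := by
  simp [twistedMap, hσ, ha, hc]

theorem twistedMap_sub_map (hσ : ∀ x, σ (σ x) = x) (ha : σ a = a) (hc : σ c = c) (hn : Odd n)
    (Y : F) : twistedMap σ a c n Y - σ (twistedMap σ a c n Y) = (a - c) * (Y - σ Y) ^ n := by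
  have hneg : (σ Y - Y) ^ (n - 1) = (Y - σ Y) ^ (n - 1) := by
    rw [← neg_sub, (Nat.Odd.sub_odd hn odd_one).neg_pow]
  rw [map_twistedMap hσ ha hc, twistedMap, hneg, ← pow_sub_one_mul hn.pos.ne']
  ring

theorem twistedMap_add_map (hσ : ∀ x, σ (σ x) = x) (ha : σ a = a) (hc : σ c = c) (hn : Odd n)
    (Y : F) : twistedMap σ a c n Y + σ (twistedMap σ a c n Y)
      = (a + c) * (Y + σ Y) * (Y - σ Y) ^ (n - 1) := by
  have hneg : (σ Y - Y) ^ (n - 1) = (Y - σ Y) ^ (n - 1) := by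
    rw [← neg_sub, (Nat.Odd.sub_odd hn odd_one).neg_pow]
  rw [map_twistedMap hσ ha hc, twistedMap, hneg]
  ring

theorem twistedMap_ratio (hσ : ∀ x, σ (σ x) = x) (ha : σ a = a) (hc : σ c = c) (hn : Odd n)
    (Y : F) :
    (twistedMap σ a c n Y + σ (twistedMap σ a c n Y)) /
        (twistedMap σ a c n Y - σ (twistedMap σ a c n Y))
      = (a + c) / (a - c) * ((Y + σ Y) / (Y - σ Y)) := by
  rw [twistedMap_add_map hσ ha hc hn, twistedMap_sub_map hσ ha hc hn]
  rcases eq_or_ne (Y - σ Y) 0 with hD | hD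
  · -- both sides are `_ / 0 = 0`
    simp [hD, hn.pos.ne']
  rw [← pow_sub_one_mul hn.pos.ne', mul_comm (_ ^ (n - 1)) (Y - σ Y), ← mul_assoc,
    mul_div_mul_right _ _ (pow_ne_zero _ hD), div_mul_div_comm]

theorem twistedMap_sub_map_div (hσ : ∀ x, σ (σ x) = x) (ha : σ a = a) (hc : σ c = c)
    (hn : Odd n) {γ : F} (hγ : γ ≠ 0) (Y : F) :
    (twistedMap σ a c n Y - σ (twistedMap σ a c n Y)) / γ
      = (a - c) * γ ^ (n - 1) * ((Y - σ Y) / γ) ^ n := by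
  rw [twistedMap_sub_map hσ ha hc hn, div_pow, ← pow_sub_one_mul hn.pos.ne' γ]
  field_simp

theorem map_ne_self_of_isPeriodicPt_twistedMap (hn : 2 ≤ n) {X : F} (hX : X ≠ 0) {k : ℕ}
    (hk : 0 < k) (hper : Function.IsPeriodicPt (twistedMap σ a c n) k X) : σ X ≠ X := by
  intro hσX
  refine hX (hper.eq_of_apply_eq_same (Function.IsFixedPt.isPeriodicPt twistedMap_zero k) hk ?_)
  rw [twistedMap_zero, twistedMap, hσX, sub_self, zero_pow (by omega), mul_zero]

theorem tau0_dvd_of_iterate_twistedMap_eq {q l0 m : ℕ} {γ α X : F} (hσ : ∀ x, σ x = x ^ q)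
    (hσσ : ∀ x, σ (σ x) = x) (ha : σ a = a) (hc : σ c = c) (hn : Odd n) (hn1 : 1 < n)
    (hq : 1 < q) (hγ : γ ≠ 0) (hσγ : σ γ = -γ) (hα : orderOf α = q - 1)
    (hA : (a - c) * γ ^ (n - 1) = α ^ l0) (hm : (twistedMap σ a c n)^[m] X = X) (hm0 : m ≠ 0)
    (hX : σ X ≠ X) :
    tau0 (q - 1) n l0 ∣ m := by
  have hv0 : (X - σ X) / γ ≠ 0 := div_ne_zero (sub_ne_zero.2 hX.symm) hγ
  have hv : σ ((X - σ X) / γ) = (X - σ X) / γ := by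
    rw [map_div₀, map_sub, hσσ, hσγ, div_neg, ← neg_div, neg_sub]
  have hv1 : ((X - σ X) / γ) ^ (q - 1) = 1 := by
    rw [pow_sub₀ _ hv0 hq.le, ← hσ, hv, pow_one, mul_inv_cancel₀ hv0]
  have hrel := pow_geom_sum_mul_pow_eq_one_of_iterate_eq (φ := fun Y => (Y - σ Y) / γ) hn.pos
    (twistedMap_sub_map_div hσσ ha hc hn hγ) hm hv0
  rw [hA, ← pow_mul] at hrel
  exact tau0_dvd (by omega) hn hn1 hm0 (gcd_dvd_of_pow_mul_pow_eq_one (by omega) hα hv1 hrel)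

theorem orderOf_dvd_of_iterate_twistedMap_eq {m : ℕ} {X : F} (hσσ : ∀ x, σ (σ x) = x)
    (ha : σ a = a) (hc : σ c = c) (hn : Odd n) (hm : (twistedMap σ a c n)^[m] X = X)
    (hX : σ X ≠ X) (hX' : σ X ≠ -X) :
    orderOf ((a + c) / (a - c)) ∣ m := by
  have hR : (X + σ X) / (X - σ X) ≠ 0 :=
    div_ne_zero (fun h => hX' (eq_neg_of_add_eq_zero_right h)) (sub_ne_zero.2 hX.symm)
  refine orderOf_dvd_of_pow_eq_one ?_
  simpa using pow_geom_sum_mul_pow_eq_one_of_iterate_eq (φ := fun Y => (Y + σ Y) / (Y - σ Y))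
    le_rfl (by simpa only [pow_one] using twistedMap_ratio hσσ ha hc hn) hm hR

end twistedMap

theorem exists_ringHom_eq_pow_of_card_eq_sq {F : Type*} [Field F] [Fintype F] {p s q : ℕ}
    (hp : p.Prime) (hq : q = p ^ s) (hF : Fintype.card F = q ^ 2) :
    ∃ σ : F →+* F, (∀ x, σ x = x ^ q) ∧ ∀ x, σ (σ x) = x := by
  have := Fact.mk hp
  have : CharP F p := charP_of_card_eq_prime_pow (f := s * 2) (by rw [hF, hq, ← pow_mul])
  refine ⟨iterateFrobenius F p s, fun x => by rw [hq, iterateFrobenius_def], fun x => ?_⟩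
  rw [iterateFrobenius_def, iterateFrobenius_def, ← pow_mul, ← sq, ← hq, ← hF,
    FiniteField.pow_card]

theorem eq_tau0 {d n l0 ε0 τ0 : ℕ} (hε0a : Even l0 → ε0 = 0)
    (hε0b : Odd l0 → ε0 = padicValNat 2 d - padicValNat 2 ((n + 1) / 2))
    (hτ0a : Nat.gcd (n - 1) l0 = n - 1 → τ0 = 1)
    (hτ0b : Nat.gcd (n - 1) l0 ≠ n - 1 →
      τ0 = 2 ^ ε0 * ∏ ℓ ∈ ((n - 1) / Nat.gcd (n - 1) l0).primeFactors.erase 2,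
        ℓ ^ (padicValNat ℓ d - padicValNat ℓ l0)) :
    τ0 = tau0 d n l0 := by
  unfold tau0 eps0
  split_ifs with hg hl0
  · exact hτ0a hg
  · rw [hτ0b hg, hε0a hl0]
  · rw [hτ0b hg, hε0b (Nat.not_even_iff_odd.1 hl0)]

theorem stmt_15_general (p s q : ℕ) (hp : p.Prime) (hs : 0 < s) (hq : q = p ^ s)
    (F : Type*) [Field F] [Fintype F] (hF : Fintype.card F = q ^ 2)
    (a c : F) (ha : a ^ q = a) (hc : c ^ q = c)
    (n : ℕ) (hn3 : 3 ≤ n) (hnodd : Odd n)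
    (f : F → F) (hf : ∀ X, f X = (c * X ^ q + a * X) * (X ^ q - X) ^ (n - 1))
    (β : F) (hβ : β ^ q ≠ β) (hβsq : (β ^ 2) ^ q = β ^ 2)
    (α : F) (hαord : orderOf α = q - 1)
    (l0 : ℕ) (hl0 : (4 * β ^ 2) ^ ((n - 1) / 2) * (a - c) = α ^ l0)
    (ε0 : ℕ)
    (hε0a : Even l0 → ε0 = 0)
    (hε0b : Odd l0 → ε0 = padicValNat 2 (q - 1) - padicValNat 2 ((n + 1) / 2))
    (τ0 : ℕ)
    (hτ0a : Nat.gcd (n - 1) l0 = n - 1 → τ0 = 1)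
    (hτ0b : Nat.gcd (n - 1) l0 ≠ n - 1 →
      τ0 = 2 ^ ε0 *
        ∏ ℓ ∈ ((n - 1) / Nat.gcd (n - 1) l0).primeFactors.erase 2,
          ℓ ^ (padicValNat ℓ (q - 1) - padicValNat ℓ l0)) :
    ∀ X : F, X ≠ 0 → (∃ k : ℕ, 1 ≤ k ∧ f^[k] X = X) →
      τ0 ∣ Function.minimalPeriod f X ∧
      (a + c ≠ 0 → X ^ q ≠ -X →
        Nat.lcm (orderOf ((a + c) / (a - c))) τ0 ∣ Function.minimalPeriod f X) := by
  rintro X hX0 ⟨k, hk, hXk⟩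
  obtain ⟨σ, hσ, hσσ⟩ := exists_ringHom_eq_pow_of_card_eq_sq hp hq hF
  obtain rfl : f = twistedMap σ a c n := funext fun Y => by rw [hf, twistedMap, hσ]
  rw [← hσ] at ha hc hβ hβsq
  have hσβ : σ β = -β := (sq_eq_sq_iff_eq_or_eq_neg.1 (by rw [← map_pow, hβsq])).resolve_left hβ
  have h2β : 2 * β ≠ 0 := fun h => hβ (by linear_combination hσβ - h)
  have hA : (a - c) * (2 * β) ^ (n - 1) = α ^ l0 := by
    rw [← hl0, mul_comm, ← Nat.two_mul_div_two_of_even (Nat.Odd.sub_odd hnodd odd_one),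
      pow_mul, Nat.mul_div_cancel_left _ two_pos]
    ring
  have hm := Function.iterate_minimalPeriod (f := twistedMap σ a c n) (x := X)
  have hm0 := (Function.IsPeriodicPt.minimalPeriod_pos hk hXk).ne'
  have hX := map_ne_self_of_isPeriodicPt_twistedMap (by omega) hX0 hk hXk
  have hτ0 : τ0 ∣ Function.minimalPeriod (twistedMap σ a c n) X :=
    eq_tau0 hε0a hε0b hτ0a hτ0b ▸ tau0_dvd_of_iterate_twistedMap_eq hσ hσσ ha hc hnodd
      (by omega) (hq ▸ Nat.one_lt_pow hs.ne' hp.one_lt) h2β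
      (by rw [map_mul, map_ofNat, hσβ, mul_neg]) hαord hA hm hm0 hX
  refine ⟨hτ0, fun _ hXq => Nat.lcm_dvd ?_ hτ0⟩
  exact orderOf_dvd_of_iterate_twistedMap_eq hσσ ha hc hnodd hm hX (hσ X ▸ hXq)

/-- `n` odd, `n ≥ 3`, `a ≠ c`. If `X ≠ 0` is periodic, then `τ0` divides
its minimal period; and if moreover `a + c ≠ 0` and `X^q ≠ -X`, then
`τ = lcm(ord((a+c)/(a-c)), τ0)` divides its minimal period. -/
theorem stmt_15 (p s q : ℕ) (hp : p.Prime) (hpodd : p ≠ 2) (hs : 0 < s) (hq : q = p ^ s)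
    (F : Type*) [Field F] [Fintype F] (hF : Fintype.card F = q ^ 2)
    (a c : F) (ha : a ^ q = a) (hc : c ^ q = c)
    (n : ℕ) (hn3 : 3 ≤ n) (hnodd : Odd n)
    (hac : a ≠ c)
    (f : F → F) (hf : ∀ X, f X = (c * X ^ q + a * X) * (X ^ q - X) ^ (n - 1))
    (β : F) (hβ : β ^ q ≠ β) (hβsq : (β ^ 2) ^ q = β ^ 2)
    (α : F) (hαq : α ^ q = α) (hα0 : α ≠ 0) (hαord : orderOf α = q - 1)
    (l0 : ℕ) (hl0 : (4 * β ^ 2) ^ ((n - 1) / 2) * (a - c) = α ^ l0)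
    (hl0min : ∀ m : ℕ, (4 * β ^ 2) ^ ((n - 1) / 2) * (a - c) = α ^ m → l0 ≤ m)
    (ε0 : ℕ)
    (hε0a : Even l0 → ε0 = 0)
    (hε0b : Odd l0 → ε0 = padicValNat 2 (q - 1) - padicValNat 2 ((n + 1) / 2))
    (τ0 : ℕ)
    (hτ0a : Nat.gcd (n - 1) l0 = n - 1 → τ0 = 1)
    (hτ0b : Nat.gcd (n - 1) l0 ≠ n - 1 →
      τ0 = 2 ^ ε0 *
        ∏ ℓ ∈ ((n - 1) / Nat.gcd (n - 1) l0).primeFactors.erase 2,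
          ℓ ^ (padicValNat ℓ (q - 1) - padicValNat ℓ l0)) :
    ∀ X : F, X ≠ 0 → (∃ k : ℕ, 1 ≤ k ∧ f^[k] X = X) →
      τ0 ∣ Function.minimalPeriod f X ∧
      (a + c ≠ 0 → X ^ q ≠ -X →
        Nat.lcm (orderOf ((a + c) / (a - c))) τ0 ∣ Function.minimalPeriod f X) :=
  stmt_15_general p s q hp hs hq F hF a c ha hc n hn3 hnodd f hf β hβ hβsq α hαord l0 hl0 ε0 hε0a
    hε0b τ0 hτ0a hτ0b
end

section
/- Assume n is odd, n ≥ 3, and a ≠ c. Then for every nonzero α ∈ F_{q^2}: if a + c = 0, the number of X ∈ F_{q^2} with f(X) = α is either 0 or q·𝔤(n); if a + c ≠ 0, the number of X ∈ F_{q^2} with f(X) = α is either 0 or 𝔤(n). -/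
/-!
Write `T X = X ^ q - X`, so that `(T X) ^ q = - T X` and
`f X = ((a + c) X + c T X) (T X) ^ (n - 1)`. Let `W` be the group of `𝔤(n)`-th roots of unity;
it lies in `F_q` and `w ^ n = 1` on it, so `f (w X) = f X` for `w ∈ W`. If `t₀ ≠ 0` and
`t ^ q = -t`, `t₀ ^ q = -t₀`, then `t ^ n = t₀ ^ n` forces `t / t₀ ∈ W`.

If `a + c = 0` then `f = c T ^ n`, so the fibre through `X₀` is `W X₀ + F_q`, which has
`𝔤(n) q` elements since `X₀ ∉ F_q`. Otherwise, because `n - 1` is even,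
`f X ^ q - f X = (a - c) (T X) ^ n`; hence `T X = T (w X₀)` for some `w ∈ W` on the fibre, and
`f` is injective on each nonzero level set of `T`, so the fibre is `W X₀`.
-/

open Set

section MonoidWithZero

variable {M₀ : Type*} [MonoidWithZero M₀] [IsRightCancelMulZero M₀] {q : ℕ}

theorem pow_eq_self_iff_of_ne_zero (hq : q ≠ 0) {x : M₀} :
    x ^ q = x ↔ x ^ (q - 1) = 1 ∨ x = 0 := by
  rw [← pow_sub_one_mul hq, mul_left_eq_self₀]

theorem pow_eq_self_of_pow_gcd_eq_one {n : ℕ} (hq : q ≠ 0) {w : M₀}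
    (hw : w ^ n.gcd (q - 1) = 1) : w ^ q = w :=
  (pow_eq_self_iff_of_ne_zero hq).2 (Or.inl (pow_gcd_eq_one.1 hw).2)

end MonoidWithZero

section FiniteField

variable {F : Type*} [Field F] [Fintype F]

theorem ncard_setOf_pow_eq_one {m : ℕ} (hm : m ∣ Fintype.card F - 1) :
    {w : F | w ^ m = 1}.ncard = m := by
  classical
  have hcard : Fintype.card F - 1 ≠ 0 := Nat.sub_ne_zero_of_lt Fintype.one_lt_card
  obtain ⟨k, hk⟩ := hm
  have hm0 : m ≠ 0 := left_ne_zero_of_mul (hk ▸ hcard)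
  have hk0 : k ≠ 0 := right_ne_zero_of_mul (hk ▸ hcard)
  obtain ⟨g, hg⟩ := IsCyclic.exists_ofOrder_eq_natCard (α := Fˣ)
  have hζ : IsPrimitiveRoot (g : F) (Fintype.card F - 1) := by
    rw [IsPrimitiveRoot.coe_units_iff, ← Fintype.card_units, ← Nat.card_eq_fintype_card, ← hg]
    exact IsPrimitiveRoot.orderOf g
  have hζm : IsPrimitiveRoot ((g : F) ^ k) m := by
    simpa [hk, hk0] using hζ.pow_of_dvd hk0 (Dvd.intro_left m hk.symm)
  have hset : {w : F | w ^ m = 1} = Polynomial.nthRootsFinset m (1 : F) := by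
    ext w
    simp [Polynomial.mem_nthRootsFinset (Nat.pos_of_ne_zero hm0)]
  rw [hset, ncard_coe_finset, hζm.card_nthRootsFinset]

theorem ncard_setOf_pow_eq_self {q : ℕ} (hq : 1 < q) (hdvd : q - 1 ∣ Fintype.card F - 1) :
    {x : F | x ^ q = x}.ncard = q := by
  have hset : {x : F | x ^ q = x} = insert 0 {w : F | w ^ (q - 1) = 1} := by
    ext x
    simp [pow_eq_self_iff_of_ne_zero (by omega : q ≠ 0), or_comm]
  rw [hset, ncard_insert_of_notMem (by simp [zero_pow (by omega : q - 1 ≠ 0)]),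
    ncard_setOf_pow_eq_one hdvd]
  omega

theorem add_pow_of_dvd_card {q : ℕ} (hq : q ∣ Fintype.card F) (x y : F) :
    (x + y) ^ q = x ^ q + y ^ q := by
  obtain ⟨k, hr, hcard⟩ := FiniteField.card F (ringChar F)
  have := ringChar.charP F
  have := Fact.mk hr
  obtain ⟨i, -, rfl⟩ := (Nat.dvd_prime_pow hr).1 (hcard ▸ hq)
  exact add_pow_char_pow x y _ _

end FiniteField

section Ring

variable {R : Type*} [Ring R] {q : ℕ}

theorem sub_pow_of_add_pow (hadd : ∀ x y : R, (x + y) ^ q = x ^ q + y ^ q) (x y : R) :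
    (x - y) ^ q = x ^ q - y ^ q := by
  rw [eq_sub_iff_add_eq, ← hadd, sub_add_cancel]

theorem pow_sub_self_pow (hadd : ∀ x y : R, (x + y) ^ q = x ^ q + y ^ q)
    (hinv : ∀ x : R, (x ^ q) ^ q = x) (X : R) : (X ^ q - X) ^ q = -(X ^ q - X) := by
  rw [sub_pow_of_add_pow hadd, hinv, neg_sub]

end Ring

section Field

variable {F : Type*} [Field F] {q : ℕ}

theorem exists_pow_gcd_eq_one_of_pow_eq_pow {n : ℕ} (hq : q ≠ 0) (hn : n ≠ 0) {t t₀ : F}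
    (ht : t ^ q = -t) (ht₀ : t₀ ^ q = -t₀) (ht₀0 : t₀ ≠ 0) (htn : t ^ n = t₀ ^ n) :
    ∃ w : F, w ^ n.gcd (q - 1) = 1 ∧ t = w * t₀ := by
  have hwn : (t / t₀) ^ n = 1 := by rw [div_pow, htn, div_self (pow_ne_zero n ht₀0)]
  have hwq : (t / t₀) ^ q = t / t₀ := by rw [div_pow, ht, ht₀, neg_div_neg_eq]
  have hw0 : t / t₀ ≠ 0 := by
    rintro h
    rw [h, zero_pow hn] at hwn
    exact zero_ne_one hwn
  refine ⟨t / t₀, pow_gcd_eq_one.2 ⟨hwn, ?_⟩, (div_mul_cancel₀ t ht₀0).symm⟩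
  exact ((pow_eq_self_iff_of_ne_zero hq).1 hwq).resolve_right hw0

theorem injOn_mul_add_of_pow_sub_ne_zero (hadd : ∀ x y : F, (x + y) ^ q = x ^ q + y ^ q)
    {X₀ : F} (hX₀ : X₀ ^ q - X₀ ≠ 0) :
    InjOn (fun z : F × F => z.1 * X₀ + z.2) ({w | w ^ q = w} ×ˢ {k | k ^ q = k}) := by
  have hT : ∀ w k : F, w ^ q = w → k ^ q = k →
      (w * X₀ + k) ^ q - (w * X₀ + k) = w * (X₀ ^ q - X₀) := by
    intro w k hw hk
    rw [hadd, mul_pow, hw, hk]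
    ring
  rintro ⟨w, k⟩ ⟨hw, hk⟩ ⟨w', k'⟩ ⟨hw', hk'⟩ (h : w * X₀ + k = w' * X₀ + k')
  obtain rfl : w = w' :=
    mul_right_cancel₀ hX₀ (by rw [← hT w k hw hk, ← hT w' k' hw' hk', h])
  exact Prod.ext rfl (add_left_cancel h)

end Field

section frobPoly

variable {R : Type*} [CommRing R] {q n : ℕ} {a c : R}

def frobPoly (q n : ℕ) (a c X : R) : R := (c * X ^ q + a * X) * (X ^ q - X) ^ (n - 1)

theorem frobPoly_eq (X : R) :
    frobPoly q n a c X = ((a + c) * X + c * (X ^ q - X)) * (X ^ q - X) ^ (n - 1) := by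
  rw [frobPoly]
  ring

theorem frobPoly_of_add_eq_zero (hn : n ≠ 0) (hac : a + c = 0) (X : R) :
    frobPoly q n a c X = c * (X ^ q - X) ^ n := by
  rw [frobPoly_eq, hac, zero_mul, zero_add, mul_assoc, ← pow_succ', Nat.sub_add_cancel
    (Nat.one_le_iff_ne_zero.2 hn)]

theorem frobPoly_add_of_add_eq_zero (hadd : ∀ x y : R, (x + y) ^ q = x ^ q + y ^ q)
    (hac : a + c = 0) {k : R} (hk : k ^ q = k) (X : R) :
    frobPoly q n a c (X + k) = frobPoly q n a c X := by
  rw [frobPoly, frobPoly, hadd, hk, add_sub_add_right_eq_sub]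
  linear_combination k * (X ^ q - X) ^ (n - 1) * hac

theorem frobPoly_mul_of_pow_eq_self (hn : n ≠ 0) {w : R} (hw : w ^ q = w) (X : R) :
    frobPoly q n a c (w * X) = w ^ n * frobPoly q n a c X := by
  have hT : (w * X) ^ q - w * X = w * (X ^ q - X) := by rw [mul_pow, hw, mul_sub]
  obtain ⟨m, rfl⟩ := Nat.exists_eq_add_one_of_ne_zero hn
  rw [frobPoly, frobPoly, hT, mul_pow, hw, Nat.add_sub_cancel, mul_pow]
  ring

theorem frobPoly_pow_sub_self (hadd : ∀ x y : R, (x + y) ^ q = x ^ q + y ^ q)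
    (hinv : ∀ x : R, (x ^ q) ^ q = x) (ha : a ^ q = a) (hc : c ^ q = c) (hn : Odd n) (X : R) :
    frobPoly q n a c X ^ q - frobPoly q n a c X = (a - c) * (X ^ q - X) ^ n := by
  obtain ⟨m, rfl⟩ := hn
  have hlin : (c * X ^ q + a * X) ^ q = c * X + a * X ^ q := by
    rw [hadd, mul_pow, mul_pow, hc, ha, hinv, add_comm]
  have heven : ((X ^ q - X) ^ (2 * m)) ^ q = (X ^ q - X) ^ (2 * m) := by
    rw [pow_right_comm, pow_sub_self_pow hadd hinv, (even_two_mul m).neg_pow]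
  simp only [frobPoly, Nat.add_sub_cancel, mul_pow, hlin, heven]
  ring

theorem sub_ne_zero_of_frobPoly_ne_zero (hn : 1 < n) {X : R} (hX : frobPoly q n a c X ≠ 0) :
    X ^ q - X ≠ 0 := by
  intro h
  rw [frobPoly, h, zero_pow (by omega), mul_zero] at hX
  exact hX rfl

theorem eq_of_frobPoly_eq [IsDomain R] (hac : a + c ≠ 0) {X Y : R}
    (hT : X ^ q - X = Y ^ q - Y) (hT0 : X ^ q - X ≠ 0)
    (h : frobPoly q n a c X = frobPoly q n a c Y) : X = Y := by
  rw [frobPoly_eq, frobPoly_eq, ← hT] at h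
  exact mul_left_cancel₀ hac (add_right_cancel (mul_right_cancel₀ (pow_ne_zero _ hT0) h))

end frobPoly

section Fibres

variable {F : Type*} [Field F] {q n : ℕ} {a c α X₀ : F}

theorem preimage_frobPoly_of_add_eq_zero (hadd : ∀ x y : F, (x + y) ^ q = x ^ q + y ^ q)
    (hinv : ∀ x : F, (x ^ q) ^ q = x) (hq : q ≠ 0) (hn : n ≠ 0) (hac : a + c = 0)
    (hα : α ≠ 0) (hX₀ : frobPoly q n a c X₀ = α) :
    frobPoly q n a c ⁻¹' {α} = (fun z : F × F => z.1 * X₀ + z.2) ''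
      ({w | w ^ n.gcd (q - 1) = 1} ×ˢ {k | k ^ q = k}) := by
  rw [frobPoly_of_add_eq_zero hn hac] at hX₀
  have hc : c ≠ 0 := left_ne_zero_of_mul (hX₀ ▸ hα)
  have hT₀ : X₀ ^ q - X₀ ≠ 0 := ne_zero_pow hn (right_ne_zero_of_mul (hX₀ ▸ hα))
  ext X
  constructor
  · intro hX
    rw [mem_preimage, mem_singleton_iff, frobPoly_of_add_eq_zero hn hac, ← hX₀] at hX
    obtain ⟨w, hw, hTw⟩ := exists_pow_gcd_eq_one_of_pow_eq_pow hq hn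
      (pow_sub_self_pow hadd hinv X) (pow_sub_self_pow hadd hinv X₀) hT₀
      (mul_left_cancel₀ hc hX)
    refine ⟨(w, X - w * X₀), ⟨hw, ?_⟩, add_sub_cancel _ _⟩
    change (X - w * X₀) ^ q = X - w * X₀
    rw [sub_pow_of_add_pow hadd, mul_pow, pow_eq_self_of_pow_gcd_eq_one hq hw]
    linear_combination hTw
  · rintro ⟨⟨w, k⟩, ⟨hw, hk⟩, rfl⟩
    have hwq : w ^ q = w := pow_eq_self_of_pow_gcd_eq_one hq hw
    rw [mem_preimage, frobPoly_add_of_add_eq_zero hadd hac hk, frobPoly_mul_of_pow_eq_self hn hwq,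
      (pow_gcd_eq_one.1 hw).1, one_mul, frobPoly_of_add_eq_zero hn hac, hX₀]
    rfl

theorem preimage_frobPoly_of_add_ne_zero (hadd : ∀ x y : F, (x + y) ^ q = x ^ q + y ^ q)
    (hinv : ∀ x : F, (x ^ q) ^ q = x) (hq : q ≠ 0) (ha : a ^ q = a) (hc : c ^ q = c)
    (hn : Odd n) (hn1 : 1 < n) (hne : a ≠ c) (hac : a + c ≠ 0) (hα : α ≠ 0)
    (hX₀ : frobPoly q n a c X₀ = α) :
    frobPoly q n a c ⁻¹' {α} = (· * X₀) '' {w | w ^ n.gcd (q - 1) = 1} := by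
  have hT₀ := sub_ne_zero_of_frobPoly_ne_zero hn1 (hX₀ ▸ hα)
  ext X
  constructor
  · intro (hX : frobPoly q n a c X = α)
    have hT := sub_ne_zero_of_frobPoly_ne_zero hn1 (hX ▸ hα)
    have hTn : (X ^ q - X) ^ n = (X₀ ^ q - X₀) ^ n := by
      refine mul_left_cancel₀ (sub_ne_zero.2 hne) ?_
      rw [← frobPoly_pow_sub_self hadd hinv ha hc hn,
        ← frobPoly_pow_sub_self hadd hinv ha hc hn, hX, hX₀]
    obtain ⟨w, hw, hTw⟩ := exists_pow_gcd_eq_one_of_pow_eq_pow hq hn.pos.ne'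
      (pow_sub_self_pow hadd hinv X) (pow_sub_self_pow hadd hinv X₀) hT₀ hTn
    have hwq := pow_eq_self_of_pow_gcd_eq_one hq hw
    refine ⟨w, hw, (eq_of_frobPoly_eq (n := n) hac ?_ hT ?_).symm⟩
    · rw [hTw, mul_pow, hwq, mul_sub]
    · rw [frobPoly_mul_of_pow_eq_self hn.pos.ne' hwq, (pow_gcd_eq_one.1 hw).1, one_mul, hX, hX₀]
  · rintro ⟨w, hw, rfl⟩
    have hwq : w ^ q = w := pow_eq_self_of_pow_gcd_eq_one hq hw
    rw [mem_preimage, frobPoly_mul_of_pow_eq_self hn.pos.ne' hwq, (pow_gcd_eq_one.1 hw).1,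
      one_mul, hX₀]
    rfl

end Fibres

section Counting

variable {F : Type*} [Field F] [Fintype F] {q n : ℕ} {a c α X₀ : F}

theorem one_lt_of_card_eq_sq (hcard : Fintype.card F = q ^ 2) : 1 < q :=
  (Nat.one_lt_pow_iff two_ne_zero).1 (hcard ▸ Fintype.one_lt_card)

theorem add_pow_of_card_eq_sq (hcard : Fintype.card F = q ^ 2) (x y : F) :
    (x + y) ^ q = x ^ q + y ^ q :=
  add_pow_of_dvd_card (hcard ▸ dvd_pow_self q two_ne_zero) x y

theorem pow_pow_eq_self_of_card_eq_sq (hcard : Fintype.card F = q ^ 2) (x : F) :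
    (x ^ q) ^ q = x := by
  rw [← pow_mul, ← sq, ← hcard, FiniteField.pow_card]

theorem ncard_preimage_frobPoly_of_add_eq_zero (hcard : Fintype.card F = q ^ 2) (hn : n ≠ 0)
    (hac : a + c = 0) (hα : α ≠ 0) (hX₀ : frobPoly q n a c X₀ = α) :
    (frobPoly q n a c ⁻¹' {α}).ncard = q * n.gcd (q - 1) := by
  have hq := one_lt_of_card_eq_sq hcard
  have hadd := add_pow_of_card_eq_sq hcard
  have hdvd : q - 1 ∣ Fintype.card F - 1 := hcard ▸ Nat.sub_one_dvd_pow_sub_one q 2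
  have hT₀ : X₀ ^ q - X₀ ≠ 0 := by
    rw [frobPoly_of_add_eq_zero hn hac] at hX₀
    exact ne_zero_pow hn (right_ne_zero_of_mul (hX₀ ▸ hα))
  have hinj : InjOn (fun z : F × F => z.1 * X₀ + z.2)
      ({w | w ^ n.gcd (q - 1) = 1} ×ˢ {k | k ^ q = k}) :=
    (injOn_mul_add_of_pow_sub_ne_zero hadd hT₀).mono
      (prod_mono (fun _ => pow_eq_self_of_pow_gcd_eq_one (by omega)) subset_rfl)
  rw [preimage_frobPoly_of_add_eq_zero hadd (pow_pow_eq_self_of_card_eq_sq hcard) (by omega) hn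
      hac hα hX₀,
    hinj.ncard_image, ncard_prod, ncard_setOf_pow_eq_one ((Nat.gcd_dvd_right n (q - 1)).trans hdvd),
    ncard_setOf_pow_eq_self hq hdvd, mul_comm]

theorem ncard_preimage_frobPoly_of_add_ne_zero (hcard : Fintype.card F = q ^ 2)
    (ha : a ^ q = a) (hc : c ^ q = c) (hn : Odd n) (hn1 : 1 < n) (hne : a ≠ c)
    (hac : a + c ≠ 0) (hα : α ≠ 0) (hX₀ : frobPoly q n a c X₀ = α) :
    (frobPoly q n a c ⁻¹' {α}).ncard = n.gcd (q - 1) := by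
  have hq := one_lt_of_card_eq_sq hcard
  have hX₀0 : X₀ ≠ 0 := by
    rintro rfl
    exact sub_ne_zero_of_frobPoly_ne_zero hn1 (hX₀ ▸ hα)
      (by simp [zero_pow (by omega : q ≠ 0)])
  rw [preimage_frobPoly_of_add_ne_zero (add_pow_of_card_eq_sq hcard)
      (pow_pow_eq_self_of_card_eq_sq hcard) (by omega) ha hc hn hn1 hne hac hα hX₀,
    ncard_image_of_injective _ (mul_left_injective₀ hX₀0),
    ncard_setOf_pow_eq_one ((Nat.gcd_dvd_right n (q - 1)).trans
      (hcard ▸ Nat.sub_one_dvd_pow_sub_one q 2))]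

end Counting

theorem stmt_18_general (q : ℕ)
    (F : Type*) [Field F] [Fintype F] (hF : Fintype.card F = q ^ 2)
    (a c : F) (ha : a ^ q = a) (hc : c ^ q = c)
    (n : ℕ) (hn3 : 3 ≤ n) (hnodd : Odd n)
    (hac : a ≠ c)
    (f : F → F) (hf : ∀ X, f X = (c * X ^ q + a * X) * (X ^ q - X) ^ (n - 1)) :
    ∀ α : F, α ≠ 0 →
      (a + c = 0 →
        (f ⁻¹' {α}).ncard = 0 ∨ (f ⁻¹' {α}).ncard = q * Nat.gcd n (q - 1)) ∧
      (a + c ≠ 0 →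
        (f ⁻¹' {α}).ncard = 0 ∨ (f ⁻¹' {α}).ncard = Nat.gcd n (q - 1)) := by
  obtain rfl : f = frobPoly q n a c := funext hf
  intro α hα
  rcases (frobPoly q n a c ⁻¹' {α}).eq_empty_or_nonempty with hempty | ⟨X₀, hX₀⟩
  · simp [hempty]
  exact ⟨fun hsum => Or.inr (ncard_preimage_frobPoly_of_add_eq_zero hF (by omega) hsum hα hX₀),
    fun hsum => Or.inr
      (ncard_preimage_frobPoly_of_add_ne_zero hF ha hc hnodd (by omega) hac hsum hα hX₀)⟩

/-- `n` odd, `n ≥ 3`, `a ≠ c`. For every nonzero `α`: if `a + c = 0`, the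
preimage of `α` has `0` or `q·𝔤(n)` elements; if `a + c ≠ 0`, it has `0` or `𝔤(n)`
elements. -/
theorem stmt_18 (p s q : ℕ) (hp : p.Prime) (hpodd : p ≠ 2) (hs : 0 < s) (hq : q = p ^ s)
    (F : Type*) [Field F] [Fintype F] (hF : Fintype.card F = q ^ 2)
    (a c : F) (ha : a ^ q = a) (hc : c ^ q = c)
    (n : ℕ) (hn3 : 3 ≤ n) (hnodd : Odd n)
    (hac : a ≠ c)
    (f : F → F) (hf : ∀ X, f X = (c * X ^ q + a * X) * (X ^ q - X) ^ (n - 1)) :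
    ∀ α : F, α ≠ 0 →
      (a + c = 0 →
        (f ⁻¹' {α}).ncard = 0 ∨ (f ⁻¹' {α}).ncard = q * Nat.gcd n (q - 1)) ∧
      (a + c ≠ 0 →
        (f ⁻¹' {α}).ncard = 0 ∨ (f ⁻¹' {α}).ncard = Nat.gcd n (q - 1)) :=
  stmt_18_general q F hF a c ha hc n hn3 hnodd hac f hf
end
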